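/- Let A be a positive definite real n×n matrix with tr A = n, and let ε ∈ (0,1). If tr((A − I_n)^2) ≥ ε, then det A ≤ e^{−ε/6}. -/

import Mathlib

open MeasureTheory ENNReal Matrix Filter Topology

noncomputable section

/-- The space of `m`-transformations: tuples of linear maps `ℝ^n → ℝ^{n_j}`,
represented as matrices. -/
abbrev MTrans (m n : ℕ) (nd : Fin m → ℕ) := ∀ j : Fin m, Matrix (Fin (nd j)) (Fin n) ℝ

/-- A valid input for the Brascamp–Lieb inequality: each `f j` is measurable and
has positive finite integral. -/
def IsInput {m : ℕ} {nd : Fin m → ℕ} (f : ∀ j : Fin m, (Fin (nd j) → ℝ) → ℝ≥0∞) : Prop :=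
  ∀ j, Measurable (f j) ∧ 0 < ∫⁻ y, f j y ∧ ∫⁻ y, f j y < ⊤

/-- The Brascamp–Lieb ratio `BL(B,c;f)`. -/
def BLratio {m n : ℕ} {nd : Fin m → ℕ} (B : MTrans m n nd) (c : Fin m → ℝ)
    (f : ∀ j : Fin m, (Fin (nd j) → ℝ) → ℝ≥0∞) : ℝ≥0∞ :=
  (∫⁻ x : Fin n → ℝ, ∏ j, f j (B j *ᵥ x) ^ c j) / ∏ j, (∫⁻ y, f j y) ^ c j

/-- The Brascamp–Lieb constant `BL(B,c)`. -/
def BLconst {m n : ℕ} {nd : Fin m → ℕ} (B : MTrans m n nd) (c : Fin m → ℝ) : ℝ≥0∞ :=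
  ⨆ (f : ∀ j : Fin m, (Fin (nd j) → ℝ) → ℝ≥0∞) (_ : IsInput f), BLratio B c f

/-- Membership in `F(c)`: finite BL constant and projection-normalised. -/
def MemF {m n : ℕ} {nd : Fin m → ℕ} (B : MTrans m n nd) (c : Fin m → ℝ) : Prop :=
  BLconst B c < ⊤ ∧ ∀ j, B j * (B j)ᵀ = 1

/-- Membership in `G(c)`: the datum `(B,c)` is geometric. -/
def Geometric {m n : ℕ} {nd : Fin m → ℕ} (B : MTrans m n nd) (c : Fin m → ℝ) : Prop :=
  (∀ j, B j * (B j)ᵀ = 1) ∧ ∑ j, c j • ((B j)ᵀ * B j) = 1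

/-- Equivalence of `m`-transformations: `B̃_j = T_j⁻¹ B_j T` for invertible `T, T_j`. -/
def EquivTrans {m n : ℕ} {nd : Fin m → ℕ} (B Bt : MTrans m n nd) : Prop :=
  ∃ (T : Matrix (Fin n) (Fin n) ℝ) (Tj : ∀ j, Matrix (Fin (nd j)) (Fin (nd j)) ℝ),
    IsUnit T ∧ (∀ j, IsUnit (Tj j)) ∧ ∀ j, Bt j = (Tj j)⁻¹ * B j * T

open scoped ComplexOrder in
/-- The square root of a positive semidefinite matrix, as defined in Mathlib (Dec 2024). -/
def Matrix.PosSemidef.sqrt {n : Type*} [Fintype n] [DecidableEq n] {𝕜 : Type*} [RCLike 𝕜]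
    {A : Matrix n n 𝕜} (hA : A.PosSemidef) : Matrix n n 𝕜 :=
  (hA.1.eigenvectorUnitary : Matrix n n 𝕜) * diagonal ((↑) ∘ (√·) ∘ hA.1.eigenvalues) *
    (star hA.1.eigenvectorUnitary : Matrix n n 𝕜)

open Classical in
/-- The map `φ`: `φ(B)_j = (B_j B_j^*)^{-1/2} B_j` (defined where `B_j B_j^*` is
positive definite, and as `B_j` otherwise). -/
def phiMap {m n : ℕ} {nd : Fin m → ℕ} (B : MTrans m n nd) : MTrans m n nd := fun j =>
  if h : (B j * (B j)ᵀ).PosDef then (h.posSemidef.sqrt)⁻¹ * B j else B j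

open Classical in
/-- The map `ψ`: `ψ(B)_j = B_j M^{-1/2}` with `M = ∑ c_j B_j^* B_j` (defined where `M`
is positive definite, and as `B_j` otherwise). -/
def psiMap {m n : ℕ} {nd : Fin m → ℕ} (c : Fin m → ℝ) (B : MTrans m n nd) : MTrans m n nd :=
  fun j =>
    if h : (∑ i, c i • ((B i)ᵀ * B i)).PosDef then B j * (h.posSemidef.sqrt)⁻¹ else B j

/-- The BL scaling map `Φ = φ ∘ ψ`. -/
def PhiMap {m n : ℕ} {nd : Fin m → ℕ} (c : Fin m → ℝ) (B : MTrans m n nd) : MTrans m n nd :=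
  phiMap (psiMap c B)

/-- The operator norm of a matrix, viewed as a linear map between Euclidean spaces. -/
def opNorm {a b : ℕ} (A : Matrix (Fin a) (Fin b) ℝ) : ℝ :=
  ‖LinearMap.toContinuousLinearMap (Matrix.toEuclideanLin A)‖

/-!
Diagonalise `A`. Its eigenvalues `λᵢ > 0` satisfy `∑ (λᵢ - 1) = 0` and `∑ (λᵢ - 1)² ≥ ε`, so
`log det A = ∑ log λᵢ` is bounded by summing the scalar inequality
`log x ≤ (x - 1) - min ((x - 1)², 1) / 6`. The truncation at `1` is what forces `ε < 1`.
-/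

open Polynomial

theorem Matrix.IsHermitian.trace_aeval_eq_sum_eigenvalues {n 𝕜 : Type*} [Fintype n]
    [DecidableEq n] [RCLike 𝕜] {A : Matrix n n 𝕜} (hA : A.IsHermitian) (p : 𝕜[X]) :
    (aeval A p).trace = ∑ i, p.eval (hA.eigenvalues i : 𝕜) := by
  conv_lhs => rw [hA.spectral_theorem, aeval_algHom_apply, Unitary.conjStarAlgAut_apply]
  rw [trace_mul_cycle, Unitary.coe_star_mul_self, one_mul, ← diagonalAlgHom_apply (R := 𝕜),
    aeval_algHom_apply, diagonalAlgHom_apply, trace_diagonal]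
  simp only [aeval_pi, Function.comp_apply, AlgHom.pi_apply, coe_aeval_eq_eval]

theorem Matrix.IsHermitian.trace_sub_one_sq {n 𝕜 : Type*} [Fintype n] [DecidableEq n] [RCLike 𝕜]
    {A : Matrix n n 𝕜} (hA : A.IsHermitian) :
    ((A - 1) ^ 2).trace = ∑ i, ((hA.eigenvalues i : 𝕜) - 1) ^ 2 := by
  have h := hA.trace_aeval_eq_sum_eigenvalues ((X - 1) ^ 2)
  simp only [map_pow, map_sub, aeval_X, map_one, eval_pow, eval_sub, eval_X, eval_one] at h
  exact h

-- `log x ≤ 2 (√x - 1)`; for `x ≤ 2` the rest is `(s - 1)² (6 - (s + 1)²) ≥ 0` with `s = √x`,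
-- which holds as `(1 + √2)² < 6`.
theorem Real.log_le_sub_one_sub_min_sq_div_six {x : ℝ} (hx : 0 < x) :
    Real.log x ≤ (x - 1) - min ((x - 1) ^ 2) 1 / 6 := by
  set s := √x
  have hs : s ^ 2 = x := Real.sq_sqrt hx.le
  have hlog : Real.log x ≤ 2 * (s - 1) := by
    have := Real.log_le_sub_one_of_pos (Real.sqrt_pos.mpr hx)
    rw [Real.log_sqrt hx.le] at this
    linarith
  suffices 2 * (s - 1) ≤ (x - 1) - min ((x - 1) ^ 2) 1 / 6 by linarith
  have hs0 : 0 ≤ s := Real.sqrt_nonneg x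
  rw [← hs]
  rcases le_or_gt (s ^ 2) 2 with hx2 | hx2
  · rw [min_eq_left (by nlinarith)]
    nlinarith [sq_nonneg (s - 1), sq_nonneg (s - 3 / 2), sq_nonneg ((s - 1) * (s + 1))]
  · nlinarith [min_le_right ((s ^ 2 - 1) ^ 2) 1, sq_nonneg (s - 17 / 12)]

theorem Finset.min_sum_one_le_sum_min_one {ι : Type*} (s : Finset ι) {a : ι → ℝ}
    (ha : ∀ i ∈ s, 0 ≤ a i) : min (∑ i ∈ s, a i) 1 ≤ ∑ i ∈ s, min (a i) 1 := by
  by_cases hsmall : ∀ i ∈ s, a i ≤ 1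
  · rw [Finset.sum_congr rfl fun i hi => min_eq_left (hsmall i hi)]
    exact min_le_left _ _
  · push Not at hsmall
    obtain ⟨i, hi, hai⟩ := hsmall
    calc min (∑ i ∈ s, a i) 1 ≤ min (a i) 1 := by rw [min_eq_right hai.le]; exact min_le_right _ _
      _ ≤ ∑ i ∈ s, min (a i) 1 :=
        Finset.single_le_sum (fun j hj => le_min (ha j hj) zero_le_one) hi

theorem Real.sum_log_le_neg_min_sum_sq_div_six {ι : Type*} [Fintype ι] {x : ι → ℝ}
    (hx : ∀ i, 0 < x i) (hsum : ∑ i, (x i - 1) = 0) :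
    ∑ i, Real.log (x i) ≤ -min (∑ i, (x i - 1) ^ 2) 1 / 6 := by
  have hmin := Finset.univ.min_sum_one_le_sum_min_one (a := fun i => (x i - 1) ^ 2)
    fun i _ => sq_nonneg _
  calc ∑ i, Real.log (x i) ≤ ∑ i, ((x i - 1) - min ((x i - 1) ^ 2) 1 / 6) :=
        Finset.sum_le_sum fun i _ => Real.log_le_sub_one_sub_min_sq_div_six (hx i)
    _ = -(∑ i, min ((x i - 1) ^ 2) 1) / 6 := by
        rw [Finset.sum_sub_distrib, hsum, ← Finset.sum_div]; ring
    _ ≤ -min (∑ i, (x i - 1) ^ 2) 1 / 6 := by linarith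

theorem Matrix.PosDef.log_det_le_neg_min_trace_sub_one_sq_div_six {n : Type*} [Fintype n]
    [DecidableEq n] {A : Matrix n n ℝ} (hA : A.PosDef) (htr : A.trace = Fintype.card n) :
    Real.log A.det ≤ -min ((A - 1) ^ 2).trace 1 / 6 := by
  have hH := hA.isHermitian
  have hsum : ∑ i, (hH.eigenvalues i - 1) = 0 := by
    have htr' := hH.trace_eq_sum_eigenvalues
    simp only [RCLike.ofReal_real_eq_id, id] at htr'
    simp [Finset.sum_sub_distrib, ← htr', htr]
  have hlog := Real.sum_log_le_neg_min_sum_sq_div_six hA.eigenvalues_pos hsum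
  rw [← Real.log_prod fun i _ => (hA.eigenvalues_pos i).ne'] at hlog
  simpa [hH.det_eq_prod_eigenvalues, hH.trace_sub_one_sq] using hlog

theorem det_le_exp_of_trace_sq_ge_general {N : ℕ} (A : Matrix (Fin N) (Fin N) ℝ)
    (hA : A.PosDef) (htr : A.trace = (N : ℝ)) (ε : ℝ) (hε1 : ε < 1)
    (h : ε ≤ ((A - 1) ^ 2).trace) :
    A.det ≤ Real.exp (-ε / 6) := by
  rw [← Real.log_le_iff_le_exp hA.det_pos]
  have hlog := hA.log_det_le_neg_min_trace_sub_one_sq_div_six (by simpa using htr)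
  have hε : ε ≤ min ((A - 1) ^ 2).trace 1 := le_min h hε1.le
  linarith

theorem det_le_exp_of_trace_sq_ge {N : ℕ} (A : Matrix (Fin N) (Fin N) ℝ)
    (hA : A.PosDef) (htr : A.trace = (N : ℝ)) (ε : ℝ) (hε0 : 0 < ε) (hε1 : ε < 1)
    (h : ε ≤ ((A - 1) ^ 2).trace) :
    A.det ≤ Real.exp (-ε / 6) :=
  det_le_exp_of_trace_sq_ge_general A hA htr ε hε1 h

end
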